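/- Let E be a finite-dimensional real Banach space with continuous dual E*, let S(E*) = {u ∈ E* : ‖u‖ = 1} be the dual unit sphere, and let V be the smallest subset of the space ℝ^(E*) of all functions E* → ℝ (with pointwise operations, order, and product) containing the evaluation maps δ_x(x*) = x*(x) for x ∈ E that is a linear subspace closed under pointwise products and pointwise binary suprema. Then for every f ∈ V: (i) for every u ∈ S(E*) the limit lim_{r→0⁺} f(r·u)/r exists, and the function Sf : [0,1] × S(E*) → ℝ defined by Sf(r,u) = f(r·u)/r for r ≠ 0 and Sf(0,u) = lim_{r→0⁺} f(r·u)/r is continuous; (ii) the map f ↦ Sf is linear and satisfies S(f ⊔ g) = Sf ⊔ Sg pointwise and S(f·g) = Sf ⋆ Sg, where (F ⋆ G)(r,u) = r·F(r,u)·G(r,u). -/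

import Mathlib

open scoped Topology

/-- A subset of the function space `W → ℝ` (with pointwise operations, order and
product) which is a linear subspace closed under pointwise products and pointwise
binary suprema. -/
def IsSublatticeSubalgebra {W : Type} (S : Set (W → ℝ)) : Prop :=
  (0 : W → ℝ) ∈ S ∧
  (∀ f g, f ∈ S → g ∈ S → f + g ∈ S) ∧
  (∀ (c : ℝ) (f), f ∈ S → c • f ∈ S) ∧
  (∀ f g, f ∈ S → g ∈ S → f * g ∈ S) ∧
  (∀ f g, f ∈ S → g ∈ S → f ⊔ g ∈ S)

/-- The smallest sublattice-subalgebra of `W → ℝ` containing `G`. -/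
def latAlgGen {W : Type} (G : Set (W → ℝ)) : Set (W → ℝ) :=
  ⋂₀ {S | IsSublatticeSubalgebra S ∧ G ⊆ S}

/-- The evaluation map `δ_x : E* → ℝ`, `δ_x x* = x* x`. -/
def evalMapD (E : Type) [NormedAddCommGroup E] [NormedSpace ℝ E] (x : E) :
    (E →L[ℝ] ℝ) → ℝ :=
  fun φ => φ x

/-- The sublattice-subalgebra of `ℝ^(E*)` generated by the evaluation maps. -/
def freeVLA (E : Type) [NormedAddCommGroup E] [NormedSpace ℝ E] :
    Set ((E →L[ℝ] ℝ) → ℝ) :=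
  latAlgGen (Set.range (evalMapD E))

/-- The compact space `[0,1] × S(E*)`. -/
abbrev cylSphere (E : Type) [NormedAddCommGroup E] [NormedSpace ℝ E] : Type :=
  ↥(Set.Icc (0 : ℝ) 1) × ↥(Metric.sphere (0 : E →L[ℝ] ℝ) 1)

/-! The extension of `f` is built by induction over the generated sublattice-subalgebra: for a
continuous linear functional `ℓ` the quotient `ℓ (r • u) / r = ℓ u` is already continuous, and
each operation of a sublattice-subalgebra has an explicit continuous counterpart on the cylinder
(`max` commutes with division by `r > 0`, and `(f g) (r u) / r = r · (f (r u) / r) · (g (r u) / r)`).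
Since `(0, 1]` is dense in `[0, 1]`, the extension is unique, which turns each of these
identities into an identity of continuous maps. -/

open Set Filter

lemma latAlgGen_subset {W : Type} {G S : Set (W → ℝ)} (hS : IsSublatticeSubalgebra S)
    (hG : G ⊆ S) : latAlgGen G ⊆ S :=
  sInter_subset_of_mem ⟨hS, hG⟩

lemma range_evalMapD_subset (E : Type) [NormedAddCommGroup E] [NormedSpace ℝ E] :
    range (evalMapD E) ⊆ range (DFunLike.coe : ((E →L[ℝ] ℝ) →L[ℝ] ℝ) → (E →L[ℝ] ℝ) → ℝ) := by
  rintro _ ⟨x, rfl⟩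
  exact ⟨ContinuousLinearMap.apply ℝ ℝ x, rfl⟩

namespace ContinuousMap

variable {X : Type*} [TopologicalSpace X]

lemma tendsto_nhdsGT_of_eq_of_ne_zero (F : C(Icc (0 : ℝ) 1 × X, ℝ)) (g : ℝ → ℝ) (u : X)
    (hg : ∀ r : Icc (0 : ℝ) 1, (r : ℝ) ≠ 0 → F (r, u) = g r) :
    Tendsto g (𝓝[>] 0) (𝓝 (F (0, u))) := by
  have hcont : Continuous fun t : ℝ => F (projIcc 0 1 zero_le_one t, u) := by fun_prop
  have hlim := (hcont.tendsto 0).mono_left (nhdsWithin_le_nhds (s := Ioi 0))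
  rw [projIcc_left] at hlim
  refine hlim.congr' ?_
  filter_upwards [Ioo_mem_nhdsGT zero_lt_one] with t ht
  rw [projIcc_of_mem _ (Ioo_subset_Icc_self ht)]
  exact hg _ ht.1.ne'

lemma ext_of_ne_zero {F G : C(Icc (0 : ℝ) 1 × X, ℝ)}
    (h : ∀ (r : Icc (0 : ℝ) 1) (u : X), (r : ℝ) ≠ 0 → F (r, u) = G (r, u)) : F = G := by
  ext ⟨r, u⟩
  by_cases hr : (r : ℝ) = 0
  · obtain rfl : r = 0 := Subtype.ext hr
    set g : ℝ → ℝ := fun t => G (projIcc 0 1 zero_le_one t, u)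
    have hG : ∀ r : Icc (0 : ℝ) 1, (r : ℝ) ≠ 0 → G (r, u) = g r := fun r _ => by
      simp only [g, projIcc_val]
    exact tendsto_nhds_unique
      (F.tendsto_nhdsGT_of_eq_of_ne_zero g u fun r hr => (h r u hr).trans (hG r hr))
      (G.tendsto_nhdsGT_of_eq_of_ne_zero g u hG)
  · exact h r u hr

/-- The product `⋆` of the informal statement. -/
def radialMul (F G : C(Icc (0 : ℝ) 1 × X, ℝ)) : C(Icc (0 : ℝ) 1 × X, ℝ) where
  toFun p := p.1 * F p * G p

@[simp]
lemma radialMul_apply (F G : C(Icc (0 : ℝ) 1 × X, ℝ)) (p : Icc (0 : ℝ) 1 × X) :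
    radialMul F G p = p.1 * F p * G p :=
  rfl

end ContinuousMap

section RadialExtension

variable {V : Type} [TopologicalSpace V] [AddCommGroup V] [Module ℝ V] {s : Set V}

def IsRadialExtension (f : V → ℝ) (F : C(Icc (0 : ℝ) 1 × s, ℝ)) : Prop :=
  ∀ (r : Icc (0 : ℝ) 1) (u : s), (r : ℝ) ≠ 0 → F (r, u) = f ((r : ℝ) • (u : V)) / r

namespace IsRadialExtension

variable {f g : V → ℝ} {F G : C(Icc (0 : ℝ) 1 × s, ℝ)}

lemma unique (hF : IsRadialExtension f F) (hG : IsRadialExtension f G) : F = G :=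
  ContinuousMap.ext_of_ne_zero fun r u hr => (hF r u hr).trans (hG r u hr).symm

lemma tendsto (hF : IsRadialExtension f F) (u : s) :
    Tendsto (fun r : ℝ => f (r • (u : V)) / r) (𝓝[>] 0) (𝓝 (F (0, u))) :=
  F.tendsto_nhdsGT_of_eq_of_ne_zero _ u fun r hr => hF r u hr

lemma zero : IsRadialExtension (s := s) 0 0 := fun _ _ _ => by simp

lemma add (hF : IsRadialExtension f F) (hG : IsRadialExtension g G) :
    IsRadialExtension (f + g) (F + G) := fun r u hr => by
  simp only [ContinuousMap.add_apply, Pi.add_apply, hF r u hr, hG r u hr, add_div]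

lemma smul (c : ℝ) (hF : IsRadialExtension f F) : IsRadialExtension (c • f) (c • F) :=
  fun r u hr => by
    simp only [ContinuousMap.smul_apply, Pi.smul_apply, smul_eq_mul, hF r u hr, mul_div_assoc]

lemma mul (hF : IsRadialExtension f F) (hG : IsRadialExtension g G) :
    IsRadialExtension (f * g) (F.radialMul G) := fun r u hr => by
  simp only [ContinuousMap.radialMul_apply, Pi.mul_apply, hF r u hr, hG r u hr]
  field_simp

lemma sup (hF : IsRadialExtension f F) (hG : IsRadialExtension g G) :
    IsRadialExtension (f ⊔ g) (F ⊔ G) := fun r u hr => by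
  simp only [ContinuousMap.sup_apply, Pi.sup_apply, hF r u hr, hG r u hr]
  exact max_div_div_right r.2.1 _ _

lemma continuousLinearMap (ℓ : V →L[ℝ] ℝ) :
    IsRadialExtension (s := s) ℓ ⟨fun p => ℓ p.2, by fun_prop⟩ := fun r u hr => by
  simp [hr]

end IsRadialExtension

lemma exists_isRadialExtension_of_mem_latAlgGen {G : Set (V → ℝ)}
    (hG : G ⊆ range (DFunLike.coe : (V →L[ℝ] ℝ) → V → ℝ)) {f : V → ℝ} (hf : f ∈ latAlgGen G) :
    ∃ F : C(Icc (0 : ℝ) 1 × s, ℝ), IsRadialExtension f F := by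
  refine latAlgGen_subset (S := {f | ∃ F, IsRadialExtension f F}) ⟨?_, ?_, ?_, ?_, ?_⟩ ?_ hf
  · exact ⟨0, .zero⟩
  · rintro f g ⟨F, hF⟩ ⟨G, hG⟩
    exact ⟨F + G, hF.add hG⟩
  · rintro c f ⟨F, hF⟩
    exact ⟨c • F, hF.smul c⟩
  · rintro f g ⟨F, hF⟩ ⟨G, hG⟩
    exact ⟨F.radialMul G, hF.mul hG⟩
  · rintro f g ⟨F, hF⟩ ⟨G, hG⟩
    exact ⟨F ⊔ G, hF.sup hG⟩
  · rintro _ hg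
    obtain ⟨ℓ, rfl⟩ := hG hg
    exact ⟨_, .continuousLinearMap ℓ⟩

end RadialExtension

theorem stmt10_general (E : Type) [NormedAddCommGroup E] [NormedSpace ℝ E] :
    ∃ S : {f : (E →L[ℝ] ℝ) → ℝ // f ∈ freeVLA E} → C(cylSphere E, ℝ),
      -- (i) `S f` takes the required values for `r ≠ 0` ...
      (∀ (f : {f // f ∈ freeVLA E}) (r : ↥(Set.Icc (0 : ℝ) 1))
          (u : ↥(Metric.sphere (0 : E →L[ℝ] ℝ) 1)), (r : ℝ) ≠ 0 →
          S f (r, u) = f.1 ((r : ℝ) • u.1) / (r : ℝ)) ∧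
      -- ... and at `r = 0` it is the (existing) right-hand limit of `f (r u)/r`
      (∀ (f : {f // f ∈ freeVLA E}) (u : ↥(Metric.sphere (0 : E →L[ℝ] ℝ) 1)),
          Filter.Tendsto (fun r : ℝ => f.1 (r • u.1) / r) (𝓝[>] (0 : ℝ))
            (𝓝 (S f (⟨0, Set.left_mem_Icc.mpr zero_le_one⟩, u)))) ∧
      -- (ii) the map `f ↦ S f` is linear ...
      (∀ (f g : (E →L[ℝ] ℝ) → ℝ) (hf : f ∈ freeVLA E) (hg : g ∈ freeVLA E)
          (hfg : f + g ∈ freeVLA E),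
          S ⟨f + g, hfg⟩ = S ⟨f, hf⟩ + S ⟨g, hg⟩) ∧
      (∀ (c : ℝ) (f : (E →L[ℝ] ℝ) → ℝ) (hf : f ∈ freeVLA E)
          (hcf : c • f ∈ freeVLA E),
          S ⟨c • f, hcf⟩ = c • S ⟨f, hf⟩) ∧
      -- ... preserves binary suprema ...
      (∀ (f g : (E →L[ℝ] ℝ) → ℝ) (hf : f ∈ freeVLA E) (hg : g ∈ freeVLA E)
          (hfg : f ⊔ g ∈ freeVLA E),
          S ⟨f ⊔ g, hfg⟩ = S ⟨f, hf⟩ ⊔ S ⟨g, hg⟩) ∧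
      -- ... and transforms the pointwise product into the product `⋆`
      (∀ (f g : (E →L[ℝ] ℝ) → ℝ) (hf : f ∈ freeVLA E) (hg : g ∈ freeVLA E)
          (hfg : f * g ∈ freeVLA E)
          (r : ↥(Set.Icc (0 : ℝ) 1)) (u : ↥(Metric.sphere (0 : E →L[ℝ] ℝ) 1)),
          S ⟨f * g, hfg⟩ (r, u) = (r : ℝ) * S ⟨f, hf⟩ (r, u) * S ⟨g, hg⟩ (r, u)) := by
  choose S hS using fun f : {f // f ∈ freeVLA E} =>
    exists_isRadialExtension_of_mem_latAlgGen (s := Metric.sphere 0 1)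
      (range_evalMapD_subset E) f.2
  refine ⟨S, fun f => hS f, fun f => (hS f).tendsto, ?_, ?_, ?_, ?_⟩
  · exact fun f g hf hg hfg => (hS ⟨f + g, hfg⟩).unique ((hS ⟨f, hf⟩).add (hS ⟨g, hg⟩))
  · exact fun c f hf hcf => (hS ⟨c • f, hcf⟩).unique ((hS ⟨f, hf⟩).smul c)
  · exact fun f g hf hg hfg => (hS ⟨f ⊔ g, hfg⟩).unique ((hS ⟨f, hf⟩).sup (hS ⟨g, hg⟩))
  · intro f g hf hg hfg r u
    rw [(hS ⟨f * g, hfg⟩).unique ((hS ⟨f, hf⟩).mul (hS ⟨g, hg⟩))]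
    rfl

theorem stmt10 (E : Type) [NormedAddCommGroup E] [NormedSpace ℝ E] [CompleteSpace E]
    [FiniteDimensional ℝ E] :
    ∃ S : {f : (E →L[ℝ] ℝ) → ℝ // f ∈ freeVLA E} → C(cylSphere E, ℝ),
      -- (i) `S f` takes the required values for `r ≠ 0` ...
      (∀ (f : {f // f ∈ freeVLA E}) (r : ↥(Set.Icc (0 : ℝ) 1))
          (u : ↥(Metric.sphere (0 : E →L[ℝ] ℝ) 1)), (r : ℝ) ≠ 0 →
          S f (r, u) = f.1 ((r : ℝ) • u.1) / (r : ℝ)) ∧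
      -- ... and at `r = 0` it is the (existing) right-hand limit of `f (r u)/r`
      (∀ (f : {f // f ∈ freeVLA E}) (u : ↥(Metric.sphere (0 : E →L[ℝ] ℝ) 1)),
          Filter.Tendsto (fun r : ℝ => f.1 (r • u.1) / r) (𝓝[>] (0 : ℝ))
            (𝓝 (S f (⟨0, Set.left_mem_Icc.mpr zero_le_one⟩, u)))) ∧
      -- (ii) the map `f ↦ S f` is linear ...
      (∀ (f g : (E →L[ℝ] ℝ) → ℝ) (hf : f ∈ freeVLA E) (hg : g ∈ freeVLA E)
          (hfg : f + g ∈ freeVLA E),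
          S ⟨f + g, hfg⟩ = S ⟨f, hf⟩ + S ⟨g, hg⟩) ∧
      (∀ (c : ℝ) (f : (E →L[ℝ] ℝ) → ℝ) (hf : f ∈ freeVLA E)
          (hcf : c • f ∈ freeVLA E),
          S ⟨c • f, hcf⟩ = c • S ⟨f, hf⟩) ∧
      -- ... preserves binary suprema ...
      (∀ (f g : (E →L[ℝ] ℝ) → ℝ) (hf : f ∈ freeVLA E) (hg : g ∈ freeVLA E)
          (hfg : f ⊔ g ∈ freeVLA E),
          S ⟨f ⊔ g, hfg⟩ = S ⟨f, hf⟩ ⊔ S ⟨g, hg⟩) ∧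
      -- ... and transforms the pointwise product into the product `⋆`
      (∀ (f g : (E →L[ℝ] ℝ) → ℝ) (hf : f ∈ freeVLA E) (hg : g ∈ freeVLA E)
          (hfg : f * g ∈ freeVLA E)
          (r : ↥(Set.Icc (0 : ℝ) 1)) (u : ↥(Metric.sphere (0 : E →L[ℝ] ℝ) 1)),
          S ⟨f * g, hfg⟩ (r, u) = (r : ℝ) * S ⟨f, hf⟩ (r, u) * S ⟨g, hg⟩ (r, u)) :=
  stmt10_general E
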